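/- The infinite series ∑_{k=0}^{∞} 1/(2(k+2)(2k+3)(2k+1)!) converges and equals 2 + sinh(1) - 2·cosh(1). -/
import Mathlib

theorem stmt_12 :
    HasSum
      (fun k : ℕ => (1 : ℝ) / (2 * (k + 2) * (2 * k + 3) * Nat.factorial (2 * k + 1)))
      (2 + Real.sinh 1 - 2 * Real.cosh 1) := by
  have hs : HasSum (fun k : ℕ => (1 : ℝ) / Nat.factorial (2 * k + 1)) (Real.sinh 1) := by
    simpa using Real.hasSum_sinh 1
  have hc : HasSum (fun k : ℕ => (1 : ℝ) / Nat.factorial (2 * k)) (Real.cosh 1) := by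
    simpa using Real.hasSum_cosh 1
  have hs' : HasSum (fun k : ℕ => (1 : ℝ) / Nat.factorial (2 * (k + 1) + 1))
      (Real.sinh 1 - 1) := by
    refine (hasSum_nat_add_iff (f := fun k : ℕ => (1 : ℝ) / Nat.factorial (2 * k + 1)) 1).2 ?_
    simpa using hs
  have hc' : HasSum (fun k : ℕ => (1 : ℝ) / Nat.factorial (2 * (k + 2)))
      (Real.cosh 1 - 3 / 2) := by
    refine (hasSum_nat_add_iff (f := fun k : ℕ => (1 : ℝ) / Nat.factorial (2 * k)) 2).2 ?_
    have : Real.cosh 1 - 3 / 2 + ∑ i ∈ Finset.range 2,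
        (1 : ℝ) / Nat.factorial (2 * i) = Real.cosh 1 := by
      simp [Finset.sum_range_succ, Nat.factorial]
      ring
    rw [this]
    exact hc
  have h := hs'.sub (hc'.mul_left 2)
  rw [show (2 : ℝ) + Real.sinh 1 - 2 * Real.cosh 1 =
      Real.sinh 1 - 1 - 2 * (Real.cosh 1 - 3 / 2) by ring]
  refine h.congr_fun fun k => ?_
  have h1 : (Nat.factorial (2 * (k + 1) + 1) : ℝ) =
      (2 * k + 3) * ((2 * k + 2) * Nat.factorial (2 * k + 1)) := by
    have e1 : 2 * (k + 1) + 1 = (2 * k + 2) + 1 := by ring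
    have e2 : 2 * k + 2 = (2 * k + 1) + 1 := by ring
    rw [e1, Nat.factorial_succ, e2, Nat.factorial_succ]
    push_cast
    ring
  have h2 : (Nat.factorial (2 * (k + 2)) : ℝ) =
      (2 * k + 4) * Nat.factorial (2 * (k + 1) + 1) := by
    have e : 2 * (k + 2) = (2 * (k + 1) + 1) + 1 := by ring
    rw [e, Nat.factorial_succ]
    push_cast
    ring
  have hf : (0 : ℝ) < Nat.factorial (2 * k + 1) := by positivity
  rw [h2, h1]
  field_simp
  ring
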